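/- arXiv:1211.5622 — 5 statements merged into one kernel-verified Lean document; each statement's English description precedes it below -/
import Mathlib

section
/- Let Λ be an Artin algebra with r² = 0 and let S be a simple Λ-module of finite projective dimension. Then Ext¹_Λ(S, S) = 0. -/
/-!
Let `0 → S → E → S → 0` be exact, and write `rM = Ring.jacobson Λ • ⊤`. As `rS = 0`, the radical
`rE` lies in the simple submodule `S`, so `rE = 0` or `rE = S`. If `rE = 0`, then `E` is semisimple
and the sequence splits. If `rE = S`, take a projective presentation `0 → K → P → S → 0` and lift
`P → S` to `φ : P → E`; then `E = φ(P) + S`, so `φ` maps `rP ⊆ K` onto `rE = S`. Since `r² = 0`,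
`rP` is semisimple, so `S` is a direct summand of `K` and `pd S ≤ pd K < pd S` unless `S` is
projective, in which case the sequence splits as well.
-/

open CategoryTheory

section ARPrelude

variable (Λ : Type) [Ring Λ]

/-- The Jacobson radical of `Λ` squares to zero. -/
def RadicalSquareZero : Prop :=
  ∀ a ∈ Ideal.jacobson (⊥ : Ideal Λ), ∀ b ∈ Ideal.jacobson (⊥ : Ideal Λ), a * b = 0

section ModDefs

variable (M : Type) [AddCommGroup M] [Module Λ M]

/-- The submodule `rM` of `M`, where `r` is the Jacobson radical of `Λ`. -/
def radSub : Submodule Λ M :=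
  Submodule.span Λ {x : M | ∃ a ∈ Ideal.jacobson (⊥ : Ideal Λ), ∃ m : M, x = a • m}

/-- `M` is an indecomposable (nonzero) module. -/
def IsIndec : Prop :=
  Nontrivial M ∧ ∀ N₁ N₂ : Submodule Λ M, IsCompl N₁ N₂ → N₁ = ⊥ ∨ N₂ = ⊥

/-- The socle of `M`: the sum of all simple submodules. -/
def socle : Submodule Λ M :=
  sSup {N : Submodule Λ M | IsSimpleModule Λ ↥N}

end ModDefs

/-- `f : P → M` is a projective cover: `P` projective, `f` a superfluous epimorphism. -/
structure IsProjCover {P M : Type} [AddCommGroup P] [Module Λ P] [AddCommGroup M] [Module Λ M]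
    (f : P →ₗ[Λ] M) : Prop where
  proj : Module.Projective Λ P
  surj : Function.Surjective f
  superfluous : ∀ N : Submodule Λ P, N ⊔ LinearMap.ker f = ⊤ → N = ⊤

/-- `0 → A → E → C → 0` (given by `f`, `g`) is an almost split (Auslander–Reiten) sequence. -/
structure IsAlmostSplitSeq {A E C : Type} [AddCommGroup A] [Module Λ A]
    [AddCommGroup E] [Module Λ E] [AddCommGroup C] [Module Λ C]
    (f : A →ₗ[Λ] E) (g : E →ₗ[Λ] C) : Prop where
  inj : Function.Injective f
  surj : Function.Surjective g
  exact : LinearMap.range f = LinearMap.ker g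
  not_split : ¬ ∃ s : C →ₗ[Λ] E, g ∘ₗ s = LinearMap.id
  indecA : IsIndec Λ A
  indecC : IsIndec Λ C
  left_almost : ∀ (X : ModuleCat.{0} Λ) (h : A →ₗ[Λ] ↥X),
    (¬ ∃ r : ↥X →ₗ[Λ] A, r ∘ₗ h = LinearMap.id) → ∃ t : E →ₗ[Λ] ↥X, t ∘ₗ f = h
  right_almost : ∀ (X : ModuleCat.{0} Λ) (h : ↥X →ₗ[Λ] C),
    (¬ ∃ s : C →ₗ[Λ] ↥X, h ∘ₗ s = LinearMap.id) → ∃ t : ↥X →ₗ[Λ] E, g ∘ₗ t = h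

/-- `A` is the Auslander–Reiten translate `τ C` of `C`, witnessed by an almost split
sequence `0 → A → E → C → 0`. -/
def IsARTranslate (A C : Type) [AddCommGroup A] [Module Λ A] [AddCommGroup C] [Module Λ C] :
    Prop :=
  ∃ (E : ModuleCat.{0} Λ) (f : A →ₗ[Λ] ↥E) (g : ↥E →ₗ[Λ] C), IsAlmostSplitSeq Λ f g

/-- `M` is τ-rigid: every homomorphism `M → τ M` vanishes (vacuous if `M` is projective,
in which case `τ M = 0`). -/
def IsTauRigid (M : Type) [AddCommGroup M] [Module Λ M] : Prop :=
  ∀ (K : ModuleCat.{0} Λ), IsARTranslate Λ (↥K) M → ∀ f : M →ₗ[Λ] ↥K, f = 0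

/-- `Q` is (isomorphic to) a direct summand of `P`. -/
def IsDSummand (Q P : Type) [AddCommGroup Q] [Module Λ Q] [AddCommGroup P] [Module Λ P] :
    Prop :=
  ∃ (i : Q →ₗ[Λ] P) (r : P →ₗ[Λ] Q), r ∘ₗ i = LinearMap.id

/-- Every short exact sequence `0 → N → E → M → 0` splits, i.e. `Ext¹(M, N) = 0`. -/
def Ext1Vanishes (M N : Type) [AddCommGroup M] [Module Λ M] [AddCommGroup N] [Module Λ N] :
    Prop :=
  ∀ (E : ModuleCat.{0} Λ) (i : N →ₗ[Λ] ↥E) (p : ↥E →ₗ[Λ] M),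
    Function.Injective i → Function.Surjective p → LinearMap.range i = LinearMap.ker p →
    ∃ s : M →ₗ[Λ] ↥E, p ∘ₗ s = LinearMap.id

/-- Projective dimension at most `n`. -/
def ProjDimLE : ℕ → ModuleCat.{0} Λ → Prop
  | 0, M => Module.Projective Λ ↥M
  | n + 1, M => ∃ (P : ModuleCat.{0} Λ) (f : ↥P →ₗ[Λ] ↥M), Module.Projective Λ ↥P ∧
      Function.Surjective f ∧ ProjDimLE n (ModuleCat.of Λ (LinearMap.ker f))

/-- Injective dimension at most `n`. -/
def InjDimLE : ℕ → ModuleCat.{0} Λ → Prop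
  | 0, M => Module.Injective Λ ↥M
  | n + 1, M => ∃ (I : ModuleCat.{0} Λ) (f : ↥M →ₗ[Λ] ↥I), Module.Injective Λ ↥I ∧
      Function.Injective f ∧ InjDimLE n (ModuleCat.of Λ (↥I ⧸ LinearMap.range f))

/-- `Λ` has finite global dimension. -/
def FiniteGlobalDim : Prop :=
  ∃ n, ∀ M : ModuleCat.{0} Λ, ProjDimLE Λ n M

/-- `Λ` is hereditary: submodules of projective modules are projective. -/
def IsHereditaryAlg : Prop :=
  ∀ (P : ModuleCat.{0} Λ), Module.Projective Λ ↥P → ∀ N : Submodule Λ ↥P, Module.Projective Λ ↥N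

/-- A module is uniserial if its submodules form a chain. -/
def IsUniserial (M : Type) [AddCommGroup M] [Module Λ M] : Prop :=
  ∀ N₁ N₂ : Submodule Λ M, N₁ ≤ N₂ ∨ N₂ ≤ N₁

/-- `Λ` is a Nakayama algebra: indecomposable projective and indecomposable injective
modules are uniserial. -/
def IsNakayamaAlg : Prop :=
  ∀ M : ModuleCat.{0} Λ, IsIndec Λ ↥M →
    (Module.Projective Λ ↥M ∨ Module.Injective Λ ↥M) → IsUniserial Λ ↥M

/-- `Λ` is connected: no nontrivial central idempotents. -/
def IsConnectedAlg : Prop :=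
  ∀ e : Λ, IsIdempotentElem e → e ∈ Subring.center Λ → e = 0 ∨ e = 1

/-- `e` is a primitive idempotent. -/
def IsPrimitiveIdempotent (e : Λ) : Prop :=
  IsIdempotentElem e ∧ e ≠ 0 ∧
    ¬ ∃ e₁ e₂ : Λ, IsIdempotentElem e₁ ∧ IsIdempotentElem e₂ ∧ e₁ ≠ 0 ∧ e₂ ≠ 0 ∧
      e₁ * e₂ = 0 ∧ e₂ * e₁ = 0 ∧ e = e₁ + e₂

/-- `Λ` is basic: distinct orthogonal primitive idempotents give non-isomorphic
indecomposable projectives. -/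
def IsBasicAlg : Prop :=
  ∀ e f : Λ, IsPrimitiveIdempotent Λ e → IsPrimitiveIdempotent Λ f → e * f = 0 → f * e = 0 →
    Nonempty ((Submodule.span Λ ({e} : Set Λ)) ≃ₗ[Λ] (Submodule.span Λ ({f} : Set Λ))) → e = f

end ARPrelude

open LinearMap Submodule

section Radical

variable {Λ : Type} [Ring Λ] {M : Type} [AddCommGroup M] [Module Λ M]

theorem jacobson_smul_top_le_ker {N : Type} [AddCommGroup N] [Module Λ N] [IsSemisimpleModule Λ N]
    (f : M →ₗ[Λ] N) : Ring.jacobson Λ • (⊤ : Submodule Λ M) ≤ ker f :=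
  smul_le.mpr fun a ha m _ ↦ by
    rw [mem_ker, map_smul,
      Module.mem_annihilator.mp (IsSemisimpleModule.jacobson_le_annihilator Λ N ha)]

theorem isSemisimpleModule_of_jacobson_smul_top_eq_bot [IsArtinianRing Λ]
    (h : Ring.jacobson Λ • (⊤ : Submodule Λ M) = ⊥) : IsSemisimpleModule Λ M := by
  have hM : Module.IsTorsionBySet Λ M (Ring.jacobson Λ) := fun m a ↦ by
    rw [← mem_bot Λ, ← h]
    exact smul_mem_smul a.2 mem_top
  let := hM.module
  exact hM.isSemisimpleModule_iff.mp inferInstance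

namespace RadicalSquareZero

theorem jacobson_smul_jacobson_smul_eq_bot (hr2 : RadicalSquareZero Λ) (N : Submodule Λ M) :
    Ring.jacobson Λ • Ring.jacobson Λ • N = ⊥ := by
  have hJJ : Ring.jacobson Λ * Ring.jacobson Λ = ⊥ := by
    refine eq_bot_iff.mpr (mul_le.mpr fun a ha b hb ↦ ?_)
    rw [← Ideal.jacobson_bot] at ha hb
    exact (hr2 a ha b hb).symm ▸ zero_mem _
  rw [← Submodule.mul_smul, hJJ, bot_smul]

theorem isSemisimpleModule_jacobson_smul_top [IsArtinianRing Λ] (hr2 : RadicalSquareZero Λ) :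
    IsSemisimpleModule Λ ↥(Ring.jacobson Λ • (⊤ : Submodule Λ M)) := by
  refine isSemisimpleModule_of_jacobson_smul_top_eq_bot
    (map_injective_of_injective (subtype_injective _) ?_)
  rw [map_smul'', Submodule.map_top, range_subtype, jacobson_smul_jacobson_smul_eq_bot hr2,
    Submodule.map_bot]

end RadicalSquareZero

end Radical

namespace Submodule

variable {R P : Type*} [Ring R] [AddCommGroup P] [Module R P] [Module.Projective R P]

/-- Mayer–Vietoris: `0 → A ⊓ B → A × B → A + B = P → 0` is exact, and it splits since `P` is
projective. -/
noncomputable def prodEquivInfProdOfSupEqTop {A B : Submodule R P} (h : A ⊔ B = ⊤) :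
    (A × B) ≃ₗ[R] ↥(A ⊓ B) × P :=
  let d : ↥(A ⊓ B) →ₗ[R] A × B := (inclusion inf_le_left).prod (-inclusion inf_le_right)
  let θ : A × B →ₗ[R] P := A.subtype.coprod B.subtype
  have hd : Function.Injective d := fun x y hxy ↦ Subtype.ext congr(($hxy).1.1)
  have hθ : Function.Surjective θ := by
    rw [← range_eq_top, range_coprod, range_subtype, range_subtype, h]
  have hexact : Function.Exact d θ := by
    rintro ⟨a, b⟩
    constructor
    · intro hab
      have hab : (a : P) + b = 0 := hab
      refine ⟨⟨a, a.2, ?_⟩, ?_⟩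
      · rw [eq_neg_of_add_eq_zero_left hab]
        exact neg_mem b.2
      · ext
        · rfl
        · exact neg_eq_of_add_eq_zero_right hab
    · rintro ⟨x, hx⟩
      rw [← hx]
      exact add_neg_cancel (x : P)
  (hexact.splitSurjectiveEquiv hd ⟨_, (Module.projective_lifting_property θ .id hθ).choose_spec⟩).1

end Submodule

namespace ProjDimLE

variable {Λ : Type} [Ring Λ]

theorem of_linearEquiv {n : ℕ} {A B : Type} [AddCommGroup A] [Module Λ A] [AddCommGroup B]
    [Module Λ B] (e : A ≃ₗ[Λ] B) (h : ProjDimLE Λ n (ModuleCat.of Λ A)) :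
    ProjDimLE Λ n (ModuleCat.of Λ B) := by
  cases n with
  | zero =>
    have : Module.Projective Λ A := h
    exact Module.Projective.of_equiv e
  | succ n =>
    obtain ⟨P, f, hP, hf, hK⟩ := h
    refine ⟨P, e.toLinearMap ∘ₗ f, hP, e.surjective.comp hf, ?_⟩
    rwa [ker_comp, LinearEquiv.ker, comap_bot]

theorem prod_of_projective {n : ℕ} {A Q : Type} [AddCommGroup A] [Module Λ A] [AddCommGroup Q]
    [Module Λ Q] [Module.Projective Λ Q] (h : ProjDimLE Λ n (ModuleCat.of Λ A)) :
    ProjDimLE Λ n (ModuleCat.of Λ (A × Q)) := by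
  cases n with
  | zero =>
    have : Module.Projective Λ A := h
    exact inferInstanceAs (Module.Projective Λ (A × Q))
  | succ n =>
    obtain ⟨P, f, hP, hf, hK⟩ := h
    refine ⟨ModuleCat.of Λ (P × Q), f.prodMap .id, inferInstanceAs (Module.Projective Λ (P × Q)),
      Prod.map_surjective.mpr ⟨hf, Function.surjective_id⟩, hK.of_linearEquiv ?_⟩
    refine (equivMapOfInjective _ (inl_injective (R := Λ) (M₂ := Q)) _).trans
      (LinearEquiv.ofEq _ _ ?_)
    rw [map_inl, ker_prodMap, ker_id]

theorem of_retract {n : ℕ} {A M : Type} [AddCommGroup A] [Module Λ A] [AddCommGroup M]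
    [Module Λ M] (i : A →ₗ[Λ] M) (ρ : M →ₗ[Λ] A) (hρi : ρ ∘ₗ i = .id)
    (h : ProjDimLE Λ n (ModuleCat.of Λ M)) : ProjDimLE Λ n (ModuleCat.of Λ A) := by
  induction n generalizing A M with
  | zero =>
    have : Module.Projective Λ M := h
    exact Module.Projective.of_split i ρ hρi
  | succ n ih =>
    obtain ⟨P, π, hP, hπ, hK⟩ := h
    have hρi' (a : A) : ρ (i a) = a := LinearMap.congr_fun hρi a
    have hρ : Function.Surjective ρ := fun a ↦ ⟨i a, hρi' a⟩
    refine ⟨P, ρ ∘ₗ π, hP, hρ.comp hπ, ?_⟩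
    -- `ker (ρ ∘ π) = K₁` is a direct summand of `K₁ × K₂ ≃ ker π × P`.
    set K₁ := (ker ρ).comap π
    set K₂ := (range i).comap π
    have hsup : K₁ ⊔ K₂ = ⊤ := by
      refine eq_top_iff.mpr fun x _ ↦ ?_
      obtain ⟨c, hc⟩ := hπ (i (ρ (π x)))
      have hc₂ : c ∈ K₂ := ⟨ρ (π x), hc.symm⟩
      have hc₁ : x - c ∈ K₁ := by
        simp only [K₁, mem_comap, mem_ker, map_sub, hc, hρi', sub_self]
      simpa using add_mem_sup hc₁ hc₂
    have hinf : K₁ ⊓ K₂ = ker π := by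
      ext x
      simp only [K₁, K₂, mem_inf, mem_comap, mem_ker, mem_range]
      constructor
      · rintro ⟨hx, a, ha⟩
        rw [← ha, hρi'] at hx
        rw [← ha, hx, map_zero]
      · intro hx
        exact ⟨by rw [hx, map_zero], 0, by rw [hx, map_zero]⟩
    have hK₁₂ : ProjDimLE Λ n (ModuleCat.of Λ (K₁ × K₂)) :=
      (hK.prod_of_projective (Q := P)).of_linearEquiv
        (((LinearEquiv.ofEq _ _ hinf).symm.prodCongr (.refl Λ P)).trans
          (prodEquivInfProdOfSupEqTop hsup).symm)
    exact ih (inl Λ K₁ K₂) (fst Λ K₁ K₂) rfl hK₁₂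

end ProjDimLE

section SelfExtension

variable {Λ : Type} [Ring Λ] [IsArtinianRing Λ]

theorem exists_retraction_ker_of_jacobson_smul_top_eq_range (hr2 : RadicalSquareZero Λ)
    {A E C P : Type} [AddCommGroup A] [Module Λ A] [AddCommGroup E] [Module Λ E]
    [AddCommGroup C] [Module Λ C] [IsSemisimpleModule Λ C] [AddCommGroup P] [Module Λ P]
    [Module.Projective Λ P] {i : A →ₗ[Λ] E} {p : E →ₗ[Λ] C} (hi : Function.Injective i)
    (hp : Function.Surjective p) (hexact : range i = ker p)
    (hrad : Ring.jacobson Λ • (⊤ : Submodule Λ E) = range i)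
    {π : P →ₗ[Λ] C} (hπ : Function.Surjective π) :
    ∃ (j : A →ₗ[Λ] ker π) (ρ : ker π →ₗ[Λ] A), ρ ∘ₗ j = .id := by
  set J := Ring.jacobson Λ
  obtain ⟨φ, hφ⟩ := Module.projective_lifting_property p π hp
  have hφ' (x : P) : p (φ x) = π x := LinearMap.congr_fun hφ x
  have hsup : range φ ⊔ range i = ⊤ := by
    refine eq_top_iff.mpr fun e _ ↦ ?_
    obtain ⟨u, hu⟩ := hπ (p e)
    have he : e - φ u ∈ range i := by rw [hexact, mem_ker, map_sub, hφ', hu, sub_self]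
    simpa using add_mem_sup (mem_range_self φ u) he
  have hrange : range i = (J • ⊤ : Submodule Λ P).map φ :=
    calc range i = J • (range φ ⊔ range i) := by rw [hsup, hrad]
      _ = J • range φ := by
        rw [smul_sup, ← hrad, RadicalSquareZero.jacobson_smul_jacobson_smul_eq_bot hr2, sup_bot_eq]
      _ = (J • ⊤ : Submodule Λ P).map φ := by rw [map_smul'', Submodule.map_top]
  have hφK : ∀ x : ker π, φ x ∈ range i := fun x ↦ by
    rw [hexact, mem_ker, hφ']
    exact x.2
  let ρ : ker π →ₗ[Λ] A :=
    (LinearEquiv.ofInjective i hi).symm.toLinearMap ∘ₗ (φ ∘ₗ (ker π).subtype).codRestrict _ hφK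
  have hiρ (x : ker π) : i (ρ x) = φ x :=
    congr_arg Subtype.val ((LinearEquiv.ofInjective i hi).apply_symm_apply _)
  have hle : (J • ⊤ : Submodule Λ P) ≤ ker π := jacobson_smul_top_le_ker π
  let g := ρ ∘ₗ inclusion hle
  have hg : Function.Surjective g := fun a ↦ by
    obtain ⟨x, hx, hxa⟩ := hrange ▸ mem_range_self i a
    exact ⟨⟨x, hx⟩, hi ((hiρ _).trans hxa)⟩
  have := RadicalSquareZero.isSemisimpleModule_jacobson_smul_top (M := P) hr2
  obtain ⟨s, hs⟩ := IsSemisimpleModule.lifting_property g hg .id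
  exact ⟨inclusion hle ∘ₗ s, ρ, hs⟩

end SelfExtension

theorem simple_finite_projdim_ext_vanishes_general
    (Λ : Type) [Ring Λ] [IsArtinianRing Λ] (hr2 : RadicalSquareZero Λ)
    (S : Type) [AddCommGroup S] [Module Λ S]
    (hS : IsSimpleModule Λ S)
    (hpd : ∃ n, ProjDimLE Λ n (ModuleCat.of Λ S)) :
    Ext1Vanishes Λ S S := by
  intro E i p hi hp hexact
  by_contra hns
  have hrad_le : Ring.jacobson Λ • (⊤ : Submodule Λ E) ≤ range i :=
    hexact ▸ jacobson_smul_top_le_ker p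
  have hatom : IsAtom (range i) :=
    isSimpleModule_iff_isAtom.mp (.congr (LinearEquiv.ofInjective i hi).symm)
  rcases hatom.le_iff.mp hrad_le with hbot | hrad
  · have := isSemisimpleModule_of_jacobson_smul_top_eq_bot hbot
    exact hns (IsSemisimpleModule.lifting_property p hp .id)
  · obtain ⟨n, hn⟩ := hpd
    induction n with
    | zero =>
      have : Module.Projective Λ S := hn
      exact hns (Module.projective_lifting_property p .id hp)
    | succ n ih =>
      obtain ⟨P, π, hP, hπ, hK⟩ := hn
      obtain ⟨j, ρ, hρj⟩ :=
        exists_retraction_ker_of_jacobson_smul_top_eq_range hr2 hi hp hexact hrad hπ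
      exact ih (hK.of_retract j ρ hρj)

/-- Over an Artin algebra with radical square zero, a simple module of
finite projective dimension has `Ext¹(S, S) = 0` (all self-extensions split). -/
theorem simple_finite_projdim_ext_vanishes
    (Λ : Type) [Ring Λ] [IsArtinianRing Λ] (hr2 : RadicalSquareZero Λ)
    (S : Type) [AddCommGroup S] [Module Λ S] [Module.Finite Λ S]
    (hS : IsSimpleModule Λ S)
    (hpd : ∃ n, ProjDimLE Λ n (ModuleCat.of Λ S)) :
    Ext1Vanishes Λ S S :=
  simple_finite_projdim_ext_vanishes_general Λ hr2 S hS hpd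
end

section
/- Let Λ be an Artin algebra with r² = 0 and finite global dimension. Then for every simple Λ-module S, Ext¹_Λ(S, S) = 0. -/
open CategoryTheory

/-!
Let `0 → S → E → S → 0` be non-split, `ψ : Λ → S` surjective and `e₀ ∈ E` a lift of `ψ 1`.
If the radical `r` killed `e₀` it would kill `E`, so `E` would be semisimple and the sequence
would split. Hence `a ↦ a • e₀` induces a nonzero map from `r ⊆ ker ψ` to `S`; as `r² = 0`, the
module `r` is semisimple, so `S` is a direct summand of its own syzygy `ker ψ`. Comparing lifts
along projective presentations, a direct summand `S` of `M ⊕ Q` (`Q` projective) is then also a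
direct summand of `Ω M ⊕ Λ`, so after finitely many steps `S` is a summand of a projective module,
although it is not projective itself.
-/

section Semisimple

variable {R M N E : Type*} [Ring R] [AddCommGroup M] [Module R M] [AddCommGroup N] [Module R N]
  [AddCommGroup E] [Module R E]

theorem LinearMap.exists_rightInverse_of_surjective_of_isSemisimpleModule
    [IsSemisimpleModule R M] (f : M →ₗ[R] N) (hf : Function.Surjective f) :
    ∃ g : N →ₗ[R] M, f ∘ₗ g = LinearMap.id := by
  obtain ⟨C, hC⟩ := exists_isCompl (LinearMap.ker f)
  let e := f.quotKerEquivOfSurjective hf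
  refine ⟨C.subtype ∘ₗ (Submodule.quotientEquivOfIsCompl _ C hC).toLinearMap ∘ₗ
    e.symm.toLinearMap, LinearMap.ext fun y => ?_⟩
  have hc : Submodule.Quotient.mk (Submodule.quotientEquivOfIsCompl _ C hC (e.symm y) : M) =
      e.symm y := by
    rw [← Submodule.quotientEquivOfIsCompl_symm_apply _ C hC, LinearEquiv.symm_apply_apply]
  have := congrArg e hc
  rwa [LinearMap.quotKerEquivOfSurjective_apply_mk, LinearEquiv.apply_symm_apply] at this

theorem isSemisimpleModule_of_isTorsionBySet_jacobson [IsSemiprimaryRing R]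
    (h : Module.IsTorsionBySet R M (Ring.jacobson R)) : IsSemisimpleModule R M :=
  letI := h.module
  h.isSemisimpleModule_iff.mp inferInstance

theorem isTorsionBySet_of_exact {I : Ideal R} [I.IsTwoSided] {i : N →ₗ[R] E} {p : E →ₗ[R] M}
    (hex : LinearMap.range i = LinearMap.ker p) (hN : Module.IsTorsionBySet R N I) {e₀ : E}
    (hgen : Function.Surjective (LinearMap.toSpanSingleton R M (p e₀)))
    (he₀ : ∀ a ∈ I, a • e₀ = 0) : Module.IsTorsionBySet R E I := by
  intro e a
  obtain ⟨b, hb⟩ := hgen (p e)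
  obtain ⟨n, hn⟩ : e - b • e₀ ∈ LinearMap.range i := by
    rw [hex, LinearMap.mem_ker, map_sub, map_smul]
    exact sub_eq_zero.mpr hb.symm
  rw [← sub_add_cancel e (b • e₀), ← hn, smul_add, ← map_smul, hN, smul_smul, map_zero,
    he₀ _ (I.mul_mem_right b a.2), add_zero]

end Semisimple

section Syzygy

variable {Λ S P₀ : Type} [Ring Λ] [AddCommGroup S] [Module Λ S] [AddCommGroup P₀] [Module Λ P₀]
  [Module.Projective Λ P₀] {ψ : P₀ →ₗ[Λ] S}

theorem isDSummand_ker_prod_of_isDSummand_prod (hψ : Function.Surjective ψ)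
    (hS : IsDSummand Λ S (LinearMap.ker ψ)) {M P₁ Q : Type} [AddCommGroup M] [Module Λ M]
    [AddCommGroup P₁] [Module Λ P₁] [Module.Projective Λ P₁] [AddCommGroup Q] [Module Λ Q]
    [Module.Projective Λ Q] {f : P₁ →ₗ[Λ] M} (hf : Function.Surjective f)
    (hSM : IsDSummand Λ S (M × Q)) : IsDSummand Λ S (LinearMap.ker f × P₀) := by
  obtain ⟨η, φ, hφη⟩ := hS
  obtain ⟨σ, τ, hτσ⟩ := hSM
  let g : P₁ × Q →ₗ[Λ] M × Q := f.prodMap LinearMap.id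
  have hg : Function.Surjective g := Prod.map_surjective.mpr ⟨hf, Function.surjective_id⟩
  obtain ⟨α, hα⟩ := Module.projective_lifting_property g (σ ∘ₗ ψ) hg
  obtain ⟨γ, hγ⟩ := Module.projective_lifting_property ψ (τ ∘ₗ g) hψ
  have hα_ker (ω : LinearMap.ker ψ) : f (α ω).1 = 0 ∧ (α ω).2 = 0 := by
    simpa [g, ω.2] using LinearMap.congr_fun hα ω
  have hγ_ker (k : LinearMap.ker f) : γ (k, 0) ∈ LinearMap.ker ψ := by
    simpa [g, Prod.mk_zero_zero] using LinearMap.congr_fun hγ (k, 0)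
  have hδ (x : P₀) : γ (α x) - x ∈ LinearMap.ker ψ := by
    rw [LinearMap.mem_ker, map_sub, sub_eq_zero]
    calc ψ (γ (α x)) = τ (g (α x)) := LinearMap.congr_fun hγ (α x)
      _ = τ (σ (ψ x)) := congrArg τ (LinearMap.congr_fun hα x)
      _ = ψ x := LinearMap.congr_fun hτσ (ψ x)
  let αK : LinearMap.ker ψ →ₗ[Λ] LinearMap.ker f :=
    LinearMap.codRestrict _ (LinearMap.fst Λ P₁ Q ∘ₗ α ∘ₗ (LinearMap.ker ψ).subtype)
      fun ω => (hα_ker ω).1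
  let γK : LinearMap.ker f →ₗ[Λ] LinearMap.ker ψ :=
    LinearMap.codRestrict _ (γ ∘ₗ LinearMap.inl Λ P₁ Q ∘ₗ (LinearMap.ker f).subtype) hγ_ker
  let δK : P₀ →ₗ[Λ] LinearMap.ker ψ := LinearMap.codRestrict _ (γ ∘ₗ α - LinearMap.id) hδ
  have hγαδ (ω : LinearMap.ker ψ) : γK (αK ω) - δK ω = ω := by
    have : ((α ω).1, 0) = α ω := Prod.ext rfl (hα_ker ω).2.symm
    ext
    change γ ((α ω).1, 0) - (γ (α ω) - ω) = (ω : P₀)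
    rw [this, sub_sub_cancel]
  refine ⟨(αK ∘ₗ η).prod ((LinearMap.ker ψ).subtype ∘ₗ η),
    φ ∘ₗ (γK ∘ₗ LinearMap.fst Λ _ _ - δK ∘ₗ LinearMap.snd Λ _ _), LinearMap.ext fun s => ?_⟩
  simpa [hγαδ] using LinearMap.congr_fun hφη s

theorem not_isDSummand_prod_of_projDimLE (hψ : Function.Surjective ψ)
    (hS : IsDSummand Λ S (LinearMap.ker ψ)) (hSp : ¬ Module.Projective Λ S) (k : ℕ) :
    ∀ M : ModuleCat.{0} Λ, ProjDimLE Λ k M → ∀ (Q : Type) [AddCommGroup Q] [Module Λ Q]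
      [Module.Projective Λ Q], ¬ IsDSummand Λ S (M × Q) := by
  induction k with
  | zero =>
    intro M hM Q _ _ _ ⟨σ, τ, hτσ⟩
    have : Module.Projective Λ M := hM
    exact hSp (Module.Projective.of_split σ τ hτσ)
  | succ k ih =>
    intro M ⟨P₁, f, hP₁, hf, hK⟩ Q _ _ _ hSM
    exact ih _ hK P₀ (isDSummand_ker_prod_of_isDSummand_prod hψ hS hf hSM)

theorem not_projDimLE_of_isDSummand_ker (hψ : Function.Surjective ψ)
    (hS : IsDSummand Λ S (LinearMap.ker ψ)) (hSp : ¬ Module.Projective Λ S) (k : ℕ) :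
    ¬ ProjDimLE Λ k (ModuleCat.of Λ S) := fun h =>
  not_isDSummand_prod_of_projDimLE hψ hS hSp k _ h P₀
    ⟨LinearMap.inl Λ S P₀, LinearMap.fst Λ S P₀, LinearMap.fst_comp_inl Λ S P₀⟩

end Syzygy

section RadicalSquareZero

variable {Λ : Type} [Ring Λ] [IsSemiprimaryRing Λ]

theorem RadicalSquareZero.isSemisimpleModule_jacobson (hr2 : RadicalSquareZero Λ) :
    IsSemisimpleModule Λ (Ring.jacobson Λ) :=
  isSemisimpleModule_of_isTorsionBySet_jacobson fun x a => Subtype.ext <|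
    hr2 a (Ideal.jacobson_bot.ge a.2) x (Ideal.jacobson_bot.ge x.2)

theorem isDSummand_ker_of_not_split (hr2 : RadicalSquareZero Λ) {S E : Type} [AddCommGroup S]
    [Module Λ S] [IsSimpleModule Λ S] [AddCommGroup E] [Module Λ E]
    {i : S →ₗ[Λ] E} {p : E →ₗ[Λ] S} (hi : Function.Injective i)
    (hp : Function.Surjective p) (hex : LinearMap.range i = LinearMap.ker p)
    (hns : ¬ ∃ s : S →ₗ[Λ] E, p ∘ₗ s = LinearMap.id) {ψ : Λ →ₗ[Λ] S}
    (hψ : Function.Surjective ψ) : IsDSummand Λ S (LinearMap.ker ψ) := by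
  let J := Ring.jacobson Λ
  have hJS : Module.IsTorsionBySet Λ S J := fun s a =>
    Module.mem_annihilator.mp (IsSemisimpleModule.jacobson_le_annihilator Λ S a.2) s
  have hJψ : J ≤ LinearMap.ker ψ := fun a ha => by
    rw [LinearMap.mem_ker, ← mul_one a, ← smul_eq_mul, map_smul]
    exact hJS (a := ⟨a, ha⟩)
  obtain ⟨e₀, he₀⟩ := hp (ψ 1)
  have hψe₀ : LinearMap.toSpanSingleton Λ S (p e₀) = ψ := LinearMap.ext_ring (by simp [he₀])
  obtain ⟨a, haJ, hae₀⟩ : ∃ a ∈ J, a • e₀ ≠ 0 := by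
    by_contra! hJe₀
    have := isSemisimpleModule_of_isTorsionBySet_jacobson
      (isTorsionBySet_of_exact hex hJS (hψe₀ ▸ hψ) hJe₀)
    exact hns (p.exists_rightInverse_of_surjective_of_isSemisimpleModule hp)
  have hmem (ω : LinearMap.ker ψ) : (ω : Λ) • e₀ ∈ LinearMap.range i := by
    rw [hex, LinearMap.mem_ker, map_smul, he₀, ← map_smul, smul_eq_mul, mul_one]
    exact ω.2
  let φ : LinearMap.ker ψ →ₗ[Λ] S := (LinearEquiv.ofInjective i hi).symm.toLinearMap ∘ₗ
    LinearMap.codRestrict _ (LinearMap.toSpanSingleton Λ E e₀ ∘ₗ (LinearMap.ker ψ).subtype) hmem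
  have hiφ (ω : LinearMap.ker ψ) : i (φ ω) = (ω : Λ) • e₀ := by
    rw [← LinearEquiv.ofInjective_apply (h := hi)]
    simp only [φ, LinearMap.comp_apply, LinearEquiv.coe_coe, LinearEquiv.apply_symm_apply]
    rfl
  have := hr2.isSemisimpleModule_jacobson
  let φJ := φ ∘ₗ Submodule.inclusion hJψ
  have hφJ : φJ ≠ 0 := fun h0 => hae₀ <| (hiφ ⟨a, hJψ haJ⟩).symm.trans <| by
    rw [show φ ⟨a, hJψ haJ⟩ = 0 from LinearMap.congr_fun h0 ⟨a, haJ⟩, map_zero]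
  obtain ⟨η, hη⟩ := φJ.exists_rightInverse_of_surjective_of_isSemisimpleModule
    (LinearMap.surjective_of_ne_zero hφJ)
  exact ⟨Submodule.inclusion hJψ ∘ₗ η, φ, hη⟩

end RadicalSquareZero

/-- Over an Artin algebra with radical square zero and finite global
dimension, every simple module has `Ext¹(S, S) = 0`. -/
theorem finite_gldim_simple_ext_vanishes
    (Λ : Type) [Ring Λ] [IsArtinianRing Λ] (hr2 : RadicalSquareZero Λ)
    (hgl : FiniteGlobalDim Λ) :
    ∀ (S : Type) [AddCommGroup S] [Module Λ S], IsSimpleModule Λ S →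
      Ext1Vanishes Λ S S := by
  intro S _ _ _ E i p hi hp hex
  by_contra hns
  have hSp : ¬ Module.Projective Λ S := fun _ =>
    hns (Module.projective_lifting_property p LinearMap.id hp)
  have := IsSimpleModule.nontrivial Λ S
  obtain ⟨s₀, hs₀⟩ := exists_ne (0 : S)
  have hψ := IsSimpleModule.toSpanSingleton_surjective Λ hs₀
  obtain ⟨n, hn⟩ := hgl
  exact not_projDimLE_of_isDSummand_ker hψ (isDSummand_ker_of_not_split hr2 hi hp hex hns hψ)
    hSp n (hn _)
end

section
/- Let Λ be a basic connected Artin algebra with r² = 0 which is not self-injective local, and let M be an indecomposable Λ-module such that τM is simple projective. Then M is τ-rigid. -/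
open CategoryTheory

/-- Over a basic connected Artin algebra with radical square zero which is
not self-injective local, an indecomposable module whose AR-translate is simple
projective is τ-rigid. -/
theorem tau_simple_projective_implies_tau_rigid
    (Λ : Type) [Ring Λ] [IsArtinianRing Λ]
    (hb : IsBasicAlg Λ) (hc : IsConnectedAlg Λ) (hr2 : RadicalSquareZero Λ)
    (hnsl : ¬ (Module.Injective Λ Λ ∧ IsLocalRing Λ))
    (M N : Type) [AddCommGroup M] [Module Λ M] [Module.Finite Λ M]
    [AddCommGroup N] [Module Λ N]
    (hMi : IsIndec Λ M) (hτ : IsARTranslate Λ N M)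
    (hNs : IsSimpleModule Λ N) (hNp : Module.Projective Λ N) :
    ∀ f : M →ₗ[Λ] N, f = 0 := by
  intro f
  by_contra hf
  -- f is surjective since N is simple and f ≠ 0
  have hrange : LinearMap.range f ≠ ⊥ := by
    intro h
    exact hf (LinearMap.range_eq_bot.mp h)
  have hsurj : Function.Surjective f :=
    LinearMap.range_eq_top.mp ((eq_bot_or_eq_top (LinearMap.range f)).resolve_left hrange)
  -- f splits since N is projective
  obtain ⟨s, hs⟩ := Module.projective_lifting_property f (LinearMap.id) hsurj
  have hfs : ∀ x : N, f (s x) = x := fun x => congrArg (fun g => g x) hs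
  -- ker f and range s are complementary
  have hcompl : IsCompl (LinearMap.ker f) (LinearMap.range s) := by
    constructor
    · rw [disjoint_iff_inf_le]
      rintro x ⟨hx1, ⟨y, rfl⟩⟩
      have : y = 0 := by
        have := hfs y
        rw [LinearMap.mem_ker.mp hx1] at this
        exact this.symm
      simp [this]
    · rw [codisjoint_iff_le_sup]
      intro m _
      have h1 : m - s (f m) ∈ LinearMap.ker f := by
        simp [LinearMap.mem_ker, hfs]
      have h2 : s (f m) ∈ LinearMap.range s := ⟨f m, rfl⟩
      have : m = (m - s (f m)) + s (f m) := by abel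
      rw [this]
      exact Submodule.add_mem_sup h1 h2
  rcases hMi.2 _ _ hcompl with h | h
  · -- ker f = ⊥, so f is an iso and M is projective; but then the AR sequence splits
    have hinj : Function.Injective f := LinearMap.ker_eq_bot.mp h
    let e : M ≃ₗ[Λ] N := LinearEquiv.ofBijective f ⟨hinj, hsurj⟩
    have hMp : Module.Projective Λ M := Module.Projective.of_equiv e.symm
    obtain ⟨E, i, g, hseq⟩ := hτ
    obtain ⟨t, ht⟩ := Module.projective_lifting_property g (LinearMap.id) hseq.surj
    exact hseq.not_split ⟨t, ht⟩
  · -- range s = ⊥, so s = 0, contradicting f ∘ s = id on nontrivial N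
    have hs0 : s = 0 := LinearMap.range_eq_bot.mp h
    obtain ⟨x, y, hxy⟩ := (IsSimpleModule.nontrivial Λ N)
    apply hxy
    have hx := hfs x
    have hy := hfs y
    rw [hs0] at hx hy
    simp at hx hy
    rw [← hx, ← hy]
end

section
/- Let Λ be an Artin algebra of finite global dimension with r² = 0, and let M be an indecomposable Λ-module with simple top M/rM. Then the first two terms P₀(M) and P₁(M) of a minimal projective resolution of M have no nonzero direct summand in common. -/
open CategoryTheory

/-! Write `S = M/rM`. Over an artinian ring the kernel of a projective cover `P → X` lies in `rP`,
with equality when `rX = 0`. As `r² = 0`, `rP` is superfluous in every `P`, so `P₀ → S` is again a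
projective cover, with kernel `ΩS = rP₀ ⊇ ker f`; and `r · ker f = 0`, so `P₁/rP₁ ≅ ker f`. A common
nonzero summand `Q` of `P₀` and `P₁` has a nonzero top `Q/rQ`, which is a summand of `P₀/rP₀ ≅ S`,
hence `Q/rQ ≅ S` as `S` is simple; and `Q/rQ` is a summand of `P₁/rP₁ ≅ ker f ⊆ ΩS`, which is
semisimple. So `S` is a direct summand of its own syzygy `ΩS`. Lifting along projective covers then
shows that `S` is a summand of each of its higher syzygies, so `pd S = ∞`, against finite global
dimension. -/

open LinearMap Submodule

section

variable {Λ : Type} [Ring Λ] {M N P S : Type} [AddCommGroup M] [Module Λ M]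
  [AddCommGroup N] [Module Λ N] [AddCommGroup P] [Module Λ P] [AddCommGroup S] [Module Λ S]

theorem smul_mem_radSub {a : Λ} (ha : a ∈ Ideal.jacobson (⊥ : Ideal Λ)) (x : M) :
    a • x ∈ radSub Λ M :=
  subset_span ⟨a, ha, x, rfl⟩

theorem map_radSub_le (φ : M →ₗ[Λ] N) : (radSub Λ M).map φ ≤ radSub Λ N := by
  rw [radSub, Submodule.map_span_le]
  rintro _ ⟨a, ha, x, rfl⟩
  rw [map_smul]
  exact smul_mem_radSub ha (φ x)

theorem map_radSub_of_surjective {φ : M →ₗ[Λ] N} (hφ : Function.Surjective φ) :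
    (radSub Λ M).map φ = radSub Λ N := by
  refine (map_radSub_le φ).antisymm ?_
  rw [radSub, span_le]
  rintro _ ⟨a, ha, y, rfl⟩
  obtain ⟨x, rfl⟩ := hφ y
  exact ⟨a • x, smul_mem_radSub ha x, map_smul φ a x⟩

theorem radSub_quotient_radSub : radSub Λ (M ⧸ radSub Λ M) = ⊥ := by
  rw [← map_radSub_of_surjective (radSub Λ M).mkQ_surjective, mkQ_map_self]

theorem isSemisimpleModule_of_radSub_eq_bot [IsSemiprimaryRing Λ] (h : radSub Λ M = ⊥) :
    IsSemisimpleModule Λ M := by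
  have hM : Module.IsTorsionBySet Λ M (Ring.jacobson Λ) := fun x a => by
    have ha : (a : Λ) ∈ Ideal.jacobson ⊥ := by rw [Ideal.jacobson_bot]; exact a.2
    simpa [h] using smul_mem_radSub ha x
  let _ := hM.module
  exact hM.isSemisimpleModule_iff.mp inferInstance

theorem jacobson_le_radSub [IsSemiprimaryRing Λ] : Module.jacobson Λ M ≤ radSub Λ M := by
  have := isSemisimpleModule_of_radSub_eq_bot (radSub_quotient_radSub (Λ := Λ) (M := M))
  exact Module.jacobson_le_of_eq_bot (IsSemisimpleModule.jacobson_eq_bot Λ _)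

theorem le_jacobson_of_forall_sup_eq_top {K : Submodule Λ M}
    (hK : ∀ C : Submodule Λ M, C ⊔ K = ⊤ → C = ⊤) : K ≤ Module.jacobson Λ M := by
  refine le_sInf fun C hC => ?_
  by_contra hKC
  exact hC.1 (hK C (hC.2 _ (left_lt_sup.mpr hKC)))

namespace RadicalSquareZero

variable (hr2 : RadicalSquareZero Λ)
include hr2

theorem smul_eq_zero {a : Λ} (ha : a ∈ Ideal.jacobson (⊥ : Ideal Λ)) {x : M}
    (hx : x ∈ radSub Λ M) : a • x = 0 := by
  induction hx using span_induction generalizing a with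
  | mem _ hy => obtain ⟨b, hb, y, rfl⟩ := hy; rw [smul_smul, hr2 a ha b hb, zero_smul]
  | zero => exact smul_zero a
  | add _ _ _ _ hx hy => rw [smul_add, hx ha, hy ha, add_zero]
  | smul b _ _ hx =>
    rw [Ideal.jacobson_bot] at ha
    rw [smul_smul, hx (by rw [Ideal.jacobson_bot]; exact Ideal.mul_mem_right b _ ha)]

theorem radSub_eq_bot_of_le {K : Submodule Λ M} (hK : K ≤ radSub Λ M) : radSub Λ K = ⊥ := by
  rw [eq_bot_iff, radSub, span_le]
  rintro _ ⟨a, ha, x, rfl⟩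
  exact (mem_bot Λ).mpr (Subtype.ext (hr2.smul_eq_zero ha (hK x.2)))

theorem eq_top_of_sup_radSub_eq_top {K : Submodule Λ M} (h : K ⊔ radSub Λ M = ⊤) : K = ⊤ := by
  have hle : radSub Λ M ≤ K := by
    rw [radSub, span_le]
    rintro _ ⟨a, ha, x, rfl⟩
    obtain ⟨k, hk, y, hy, rfl⟩ := mem_sup.mp (h ▸ mem_top : x ∈ K ⊔ radSub Λ M)
    rw [smul_add, hr2.smul_eq_zero ha hy, add_zero]
    exact K.smul_mem a hk
  rwa [sup_eq_left.mpr hle] at h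

theorem nontrivial_quotient_radSub [Nontrivial M] : Nontrivial (M ⧸ radSub Λ M) :=
  Quotient.nontrivial_iff.mpr fun h => bot_ne_top <|
    hr2.eq_top_of_sup_radSub_eq_top (by rw [h, sup_top_eq])

end RadicalSquareZero

namespace IsDSummand

theorem refl : IsDSummand Λ M M :=
  ⟨LinearMap.id, LinearMap.id, rfl⟩

theorem trans (hMN : IsDSummand Λ M N) (hNP : IsDSummand Λ N P) : IsDSummand Λ M P :=
  let ⟨i₁, r₁, h₁⟩ := hMN
  let ⟨i₂, r₂, h₂⟩ := hNP
  ⟨i₂ ∘ₗ i₁, r₁ ∘ₗ r₂, by rw [comp_assoc, ← comp_assoc i₁, h₂, id_comp, h₁]⟩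

theorem of_linearEquiv (e : M ≃ₗ[Λ] N) : IsDSummand Λ M N :=
  ⟨e, e.symm, by ext; simp⟩

theorem of_injective [IsSemisimpleModule Λ N] {i : M →ₗ[Λ] N} (hi : Function.Injective i) :
    IsDSummand Λ M N :=
  let ⟨r, hr⟩ := IsSemisimpleModule.extension_property i hi LinearMap.id
  ⟨i, r, hr⟩

theorem subsingleton [Subsingleton N] (h : IsDSummand Λ M N) : Subsingleton M :=
  let ⟨i, r, hri⟩ := h
  (injective_of_comp_eq_id i r hri).subsingleton

theorem quotient_radSub (h : IsDSummand Λ M N) :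
    IsDSummand Λ (M ⧸ radSub Λ M) (N ⧸ radSub Λ N) :=
  let ⟨i, r, hri⟩ := h
  ⟨mapQ _ _ i (map_le_iff_le_comap.mp (map_radSub_le i)),
    mapQ _ _ r (map_le_iff_le_comap.mp (map_radSub_le r)), by
      ext x
      simp [← LinearMap.comp_apply r i, hri]⟩

theorem symm_of_isSimpleModule [IsSimpleModule Λ N] [Nontrivial M] (h : IsDSummand Λ M N) :
    IsDSummand Λ N M := by
  obtain ⟨i, r, hri⟩ := h
  have hi : Function.Injective i := injective_of_comp_eq_id i r hri
  have hrange : range i = ⊤ := (eq_bot_or_eq_top (range i)).resolve_left fun h => by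
    obtain ⟨x, hx⟩ := exists_ne (0 : M)
    exact hx (hi (by simpa [h] using mem_range_self i x))
  exact of_linearEquiv (LinearEquiv.ofBijective i ⟨hi, range_eq_top.mp hrange⟩).symm

end IsDSummand

theorem isDSummand_ker_of_comp_eq {X X' : Type} [AddCommGroup X] [Module Λ X]
    [AddCommGroup X'] [Module Λ X'] {π : P →ₗ[Λ] S} {h : X' →ₗ[Λ] X}
    {α : P →ₗ[Λ] X'} {β : X' →ₗ[Λ] P} {u : S →ₗ[Λ] X} {v : X →ₗ[Λ] S}
    (hα : h ∘ₗ α = u ∘ₗ π) (hβ : π ∘ₗ β = v ∘ₗ h) (hβα : β ∘ₗ α = LinearMap.id) :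
    IsDSummand Λ (ker π) (ker h) := by
  refine ⟨α.restrict fun x hx => ?_, β.restrict fun x hx => ?_, ?_⟩
  · rw [mem_ker, ← LinearMap.comp_apply, hα, LinearMap.comp_apply, mem_ker.mp hx, map_zero]
  · rw [mem_ker, ← LinearMap.comp_apply, hβ, LinearMap.comp_apply, mem_ker.mp hx, map_zero]
  · ext x
    simp [← LinearMap.comp_apply β α, hβα]

namespace IsProjCover

variable {π : P →ₗ[Λ] S} (hπ : IsProjCover Λ π)
include hπ

theorem surjective_of_surjective_comp {ψ : N →ₗ[Λ] P} (h : Function.Surjective (π ∘ₗ ψ)) :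
    Function.Surjective ψ := by
  refine range_eq_top.mp (hπ.superfluous _ (eq_top_iff.mpr fun p _ => ?_))
  obtain ⟨n, hn⟩ := h (π p)
  refine mem_sup.mpr ⟨ψ n, mem_range_self ψ n, p - ψ n, ?_, add_sub_cancel _ _⟩
  rw [mem_ker, map_sub, ← LinearMap.comp_apply, hn, sub_self]

theorem bijective_of_comp_eq {θ : P →ₗ[Λ] P} (hθ : π ∘ₗ θ = π) : Function.Bijective θ := by
  have := hπ.proj
  have hθs : Function.Surjective θ :=
    hπ.surjective_of_surjective_comp (by rw [hθ]; exact hπ.surj)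
  obtain ⟨σ, hσ⟩ := Module.projective_lifting_property θ LinearMap.id hθs
  have hπσ : π ∘ₗ σ = π := by conv_lhs => rw [← hθ, comp_assoc, hσ, comp_id]
  have hσs : Function.Surjective σ := hπ.surjective_of_surjective_comp (by rw [hπσ]; exact hπ.surj)
  have hθσ : Function.LeftInverse θ σ := LinearMap.congr_fun hσ
  exact ⟨(hθσ.rightInverse_of_surjective hσs).injective, hθs⟩

theorem injective_of_projective [Module.Projective Λ S] : Function.Injective π := by
  obtain ⟨σ, hσ⟩ := Module.projective_lifting_property π LinearMap.id hπ.surj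
  have hσs : Function.Surjective σ :=
    hπ.surjective_of_surjective_comp (by rw [hσ]; exact Function.surjective_id)
  have hπσ : Function.LeftInverse π σ := LinearMap.congr_fun hσ
  exact (hπσ.rightInverse_of_surjective hσs).injective

theorem exists_split_lift {X X' : Type} [AddCommGroup X] [Module Λ X]
    [AddCommGroup X'] [Module Λ X'] [Module.Projective Λ X'] {h : X' →ₗ[Λ] X}
    (hh : Function.Surjective h) {j : S →ₗ[Λ] X} {q : X →ₗ[Λ] S} (hqj : q ∘ₗ j = LinearMap.id) :
    ∃ (α : P →ₗ[Λ] X') (β : X' →ₗ[Λ] P),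
      h ∘ₗ α = j ∘ₗ π ∧ π ∘ₗ β = q ∘ₗ h ∧ β ∘ₗ α = LinearMap.id := by
  have := hπ.proj
  obtain ⟨α, hα⟩ := Module.projective_lifting_property h (j ∘ₗ π) hh
  obtain ⟨β, hβ⟩ := Module.projective_lifting_property π (q ∘ₗ h) hπ.surj
  have hθ : π ∘ₗ (β ∘ₗ α) = π := by
    rw [← comp_assoc, hβ, comp_assoc, hα, ← comp_assoc, hqj, id_comp]
  -- `β ∘ α` is an automorphism of the cover; correcting `β` by its inverse makes `α` split.
  let θ := LinearEquiv.ofBijective (β ∘ₗ α) (hπ.bijective_of_comp_eq hθ)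
  have hπθ : π ∘ₗ (θ.symm : P →ₗ[Λ] P) = π := by
    ext x
    obtain ⟨y, rfl⟩ := θ.surjective x
    rw [LinearMap.comp_apply, LinearEquiv.coe_coe, θ.symm_apply_apply]
    exact (LinearMap.congr_fun hθ y).symm
  refine ⟨α, θ.symm ∘ₗ β, hα, by rw [← comp_assoc, hπθ, hβ], ?_⟩
  ext x
  exact θ.symm_apply_apply x

theorem not_projDimLE [Nontrivial S] (hS : IsDSummand Λ S (ker π)) :
    ∀ (n : ℕ) (X : ModuleCat.{0} Λ), IsDSummand Λ S X → ¬ ProjDimLE Λ n X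
  | 0, X, ⟨j, q, hqj⟩, hX => by
    have : Module.Projective Λ X := hX
    have := Module.Projective.of_split j q hqj
    have : Subsingleton (ker π) := (ker_eq_bot.mpr hπ.injective_of_projective) ▸ inferInstance
    exact not_subsingleton S hS.subsingleton
  | n + 1, X, ⟨j, q, hqj⟩, ⟨_, h, _, hh, hpd⟩ => by
    obtain ⟨α, β, hα, hβ, hβα⟩ := hπ.exists_split_lift hh hqj
    exact not_projDimLE hS n _ (hS.trans (isDSummand_ker_of_comp_eq hα hβ hβα)) hpd

variable [IsSemiprimaryRing Λ]

theorem ker_le_radSub : ker π ≤ radSub Λ P :=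
  (le_jacobson_of_forall_sup_eq_top hπ.superfluous).trans jacobson_le_radSub

theorem ker_eq_radSub (hS : radSub Λ S = ⊥) : ker π = radSub Λ P :=
  hπ.ker_le_radSub.antisymm <| by
    rw [← comap_bot, ← hS, ← map_le_iff_le_comap]
    exact map_radSub_le π

noncomputable def quotientRadSubEquiv (hS : radSub Λ S = ⊥) : (P ⧸ radSub Λ P) ≃ₗ[Λ] S :=
  (quotEquivOfEq _ _ (hπ.ker_eq_radSub hS).symm).trans (π.quotKerEquivOfSurjective hπ.surj)

end IsProjCover

theorem RadicalSquareZero.isProjCover_mkQ_comp [IsSemiprimaryRing Λ] (hr2 : RadicalSquareZero Λ)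
    {f : P →ₗ[Λ] M} (hf : IsProjCover Λ f) : IsProjCover Λ ((radSub Λ M).mkQ ∘ₗ f) where
  proj := hf.proj
  surj := (radSub Λ M).mkQ_surjective.comp hf.surj
  superfluous K hK := by
    have hker : ker ((radSub Λ M).mkQ ∘ₗ f) = radSub Λ P := by
      rw [ker_comp, ker_mkQ, ← map_radSub_of_surjective hf.surj, comap_map_eq,
        sup_eq_left.mpr hf.ker_le_radSub]
    exact hr2.eq_top_of_sup_radSub_eq_top (hker ▸ hK)

end

theorem simple_top_no_common_summand_general
    (Λ : Type) [Ring Λ] [IsArtinianRing Λ] (hr2 : RadicalSquareZero Λ)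
    (hgl : FiniteGlobalDim Λ)
    (M : Type) [AddCommGroup M] [Module Λ M]
    (htop : IsSimpleModule Λ (M ⧸ radSub Λ M))
    (P0 : Type) [AddCommGroup P0] [Module Λ P0] (f : P0 →ₗ[Λ] M) (hf : IsProjCover Λ f)
    (P1 : Type) [AddCommGroup P1] [Module Λ P1]
    (g : P1 →ₗ[Λ] ↥(LinearMap.ker f)) (hg : IsProjCover Λ g) :
    ∀ (Q : Type) [AddCommGroup Q] [Module Λ Q], Nontrivial Q →
      IsDSummand Λ Q P0 → IsDSummand Λ Q P1 → False := by
  intro Q _ _ _ hQ0 hQ1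
  obtain ⟨n, hn⟩ := hgl
  let π : P0 →ₗ[Λ] M ⧸ radSub Λ M := (radSub Λ M).mkQ ∘ₗ f
  have hπ : IsProjCover Λ π := hr2.isProjCover_mkQ_comp hf
  have hkerπ := hπ.ker_eq_radSub radSub_quotient_radSub
  have hkerf : ker f ≤ ker π := hkerπ ▸ hf.ker_le_radSub
  have := hr2.nontrivial_quotient_radSub (M := Q)
  have := IsSimpleModule.nontrivial Λ (M ⧸ radSub Λ M)
  have := isSemisimpleModule_of_radSub_eq_bot (hr2.radSub_eq_bot_of_le hkerπ.le)
  have hSQ : IsDSummand Λ (M ⧸ radSub Λ M) (Q ⧸ radSub Λ Q) :=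
    (hQ0.quotient_radSub.trans (.of_linearEquiv
      (hπ.quotientRadSubEquiv radSub_quotient_radSub))).symm_of_isSimpleModule
  have hQK : IsDSummand Λ (Q ⧸ radSub Λ Q) (ker π) :=
    hQ1.quotient_radSub.trans <| .of_injective (i := inclusion hkerf ∘ₗ
      (hg.quotientRadSubEquiv (hr2.radSub_eq_bot_of_le hf.ker_le_radSub)).toLinearMap)
      ((inclusion_injective hkerf).comp (LinearEquiv.injective _))
  exact hπ.not_projDimLE (hSQ.trans hQK) n (.of Λ _) .refl (hn _)

/-- Over an Artin algebra of finite global dimension with radical square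
zero, an indecomposable module with simple top has no common nonzero direct summand in
the first two terms of its minimal projective resolution. -/
theorem simple_top_no_common_summand
    (Λ : Type) [Ring Λ] [IsArtinianRing Λ] (hr2 : RadicalSquareZero Λ)
    (hgl : FiniteGlobalDim Λ)
    (M : Type) [AddCommGroup M] [Module Λ M] [Module.Finite Λ M]
    (hMi : IsIndec Λ M) (htop : IsSimpleModule Λ (M ⧸ radSub Λ M))
    (P0 : Type) [AddCommGroup P0] [Module Λ P0] (f : P0 →ₗ[Λ] M) (hf : IsProjCover Λ f)
    (P1 : Type) [AddCommGroup P1] [Module Λ P1]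
    (g : P1 →ₗ[Λ] ↥(LinearMap.ker f)) (hg : IsProjCover Λ g) :
    ∀ (Q : Type) [AddCommGroup Q] [Module Λ Q], Nontrivial Q →
      IsDSummand Λ Q P0 → IsDSummand Λ Q P1 → False :=
  simple_top_no_common_summand_general Λ hr2 hgl M htop P0 f hf P1 g hg
end

section
/- Let Λ be an Artin algebra and S a simple Λ-module whose first syzygy Ω¹S is nonzero semisimple and does not contain S as a direct summand. Let S₁ be a simple submodule of Ω¹S and m the maximal integer with S₁^m a direct summand of Ω¹S. Then the cokernel M of the composite inclusion Ω¹S/S₁^m ↪ Ω¹S ↪ P₀(S) (i.e. the module fitting in 0 → Ω¹S/S₁^m → P₀(S) → M → 0) is indecomposable and τ-rigid. -/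
open CategoryTheory

/-!
`M = P ⧸ C` is local: its radical `ker p ⧸ C` is superfluous because `ker p` is, so `M` is
indecomposable.

For rigidity, lift `P → M` through the epimorphism of an extension `0 → N → E → M → 0`; the lift
kills `C`, and hence induces a splitting, as soon as `Hom(C, N) = 0`. A nonzero map from the
semisimple module `C` to a quotient `N` of `M^t` embeds a simple submodule `U` of `C` into `N`,
making `U` a subquotient of `M^t`. As `M^t` is an extension of `S^t` by `(ker p ⧸ C)^t ≅ T^t`,
which is isotypic of type `S₁`, either `U ≅ S` or `U ≅ S₁`. In the first case `S` is a direct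
summand of `Ω¹S`; in the second so is `U ⊕ T ≅ S₁^(m+1)`.
-/

open LinearMap Submodule

def IsSubquotient (Λ : Type*) [Ring Λ] (U X : Type*) [AddCommGroup U] [Module Λ U]
    [AddCommGroup X] [Module Λ X] : Prop :=
  ∃ (W : Submodule Λ X) (θ : W →ₗ[Λ] U), Function.Surjective θ

def Submodule.IsSuperfluous {Λ X : Type*} [Ring Λ] [AddCommGroup X] [Module Λ X]
    (N : Submodule Λ X) : Prop :=
  ∀ N' : Submodule Λ X, N' ⊔ N = ⊤ → N' = ⊤

section

variable {Λ : Type*} [Ring Λ] {U X Y Z : Type*} [AddCommGroup U] [Module Λ U]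
  [AddCommGroup X] [Module Λ X] [AddCommGroup Y] [Module Λ Y] [AddCommGroup Z] [Module Λ Z]

theorem isSubquotient_of_injective_of_surjective {i : U →ₗ[Λ] Y} (hi : Function.Injective i)
    {q : X →ₗ[Λ] Y} (hq : Function.Surjective q) : IsSubquotient Λ U X := by
  refine ⟨(range i).comap q,
    (LinearEquiv.ofInjective i hi).symm ∘ₗ q.restrict (q := range i) fun _ hx ↦ hx, fun u ↦ ?_⟩
  obtain ⟨x, hx⟩ := hq (i u)
  refine ⟨⟨x, u, hx.symm⟩, (LinearEquiv.ofInjective i hi).symm_apply_eq.mpr ?_⟩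
  exact Subtype.ext hx

theorem IsSubquotient.ker_or_target [IsSimpleModule Λ U] (h : IsSubquotient Λ U X) (g : X →ₗ[Λ] Y) :
    IsSubquotient Λ U (ker g) ∨ IsSubquotient Λ U Y := by
  obtain ⟨W, θ, hθ⟩ := h
  set g' := g ∘ₗ W.subtype
  by_cases hk : ker g' ≤ ker θ
  · refine .inr ⟨range g', (ker g').liftQ θ hk ∘ₗ g'.quotKerEquivRange.symm.toLinearMap, ?_⟩
    have hθ' : Function.Surjective ((ker g').liftQ θ hk) := fun u ↦ by
      obtain ⟨w, rfl⟩ := hθ u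
      exact ⟨(ker g').mkQ w, rfl⟩
    exact hθ'.comp g'.quotKerEquivRange.symm.surjective
  · obtain ⟨w, hw, hθw⟩ := SetLike.not_le_iff_exists.mp hk
    let W₁ := W.comap (ker g).subtype
    let incl : W₁ →ₗ[Λ] W := ((ker g).subtype ∘ₗ W₁.subtype).codRestrict W fun x ↦ x.2
    refine .inl ⟨W₁, θ ∘ₗ incl, surjective_of_ne_zero fun h0 ↦ hθw ?_⟩
    exact congr($h0 ⟨⟨w, hw⟩, w.2⟩)

theorem IsSubquotient.nonempty_linearEquiv [IsSimpleModule Λ U] [IsSemisimpleModule Λ X]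
    (hX : IsIsotypicOfType Λ X Z) (h : IsSubquotient Λ U X) : Nonempty (U ≃ₗ[Λ] Z) := by
  obtain ⟨W, θ, hθ⟩ := h
  have := IsSimpleModule.nontrivial Λ U
  obtain ⟨V, ⟨e⟩⟩ := linearEquiv_of_ne_zero (ne_zero_of_surjective hθ)
  have := IsSimpleModule.congr e.symm
  obtain ⟨e'⟩ := hX.of_injective W.subtype W.injective_subtype V
  exact ⟨e.trans e'⟩

theorem IsIsotypicOfType.pi {ι : Type*} [Finite ι] [IsSemisimpleModule Λ Y] [IsSimpleModule Λ Z]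
    (h : IsIsotypicOfType Λ Y Z) : IsIsotypicOfType Λ (ι → Y) Z := by
  classical
  rw [← isotypicComponent_eq_top_iff] at h ⊢
  rw [eq_top_iff, ← iSup_range_single]
  refine iSup_le fun i ↦ ?_
  rw [range_eq_map, ← h, map_le_iff_le_comap]
  exact le_comap_isotypicComponent Z _

theorem LinearMap.eq_zero_of_not_isSubquotient {C : Type*} [AddCommGroup C] [Module Λ C]
    [IsSemisimpleModule Λ C] {q : X →ₗ[Λ] Y} (hq : Function.Surjective q)
    (hC : ∀ U : Submodule Λ C, IsSimpleModule Λ U → ¬ IsSubquotient Λ U X) (f : C →ₗ[Λ] Y) :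
    f = 0 := by
  by_contra hf
  obtain ⟨U, hU, hfU⟩ :=
    exists_ne_zero_of_sSup_eq_top hf _ (IsSemisimpleModule.sSup_simples_eq_top Λ C)
  have : IsSimpleModule Λ U := hU
  exact hC U hU (isSubquotient_of_injective_of_surjective (injective_of_ne_zero hfU) hq)

theorem LinearMap.injective_coprod_of_disjoint_range {f : X →ₗ[Λ] Z} {g : Y →ₗ[Λ] Z}
    (hf : Function.Injective f) (hg : Function.Injective g) (hd : Disjoint (range f) (range g)) :
    Function.Injective (f.coprod g) := by
  rw [← ker_eq_bot, ker_coprod_of_disjoint_range f g hd, ker_eq_bot.mpr hf, ker_eq_bot.mpr hg,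
    Submodule.prod_bot]

def LinearMap.kerCompLeftEquiv (f : X →ₗ[Λ] Y) (ι : Type*) :
    ker (f.compLeft ι) ≃ₗ[Λ] (ι → ker f) where
  toFun x i := ⟨x.1 i, congr_fun x.2 i⟩
  invFun y := ⟨fun i ↦ y i, funext fun i ↦ (y i).2⟩
  map_add' _ _ := rfl
  map_smul' _ _ := rfl
  left_inv _ := rfl
  right_inv _ := rfl

noncomputable def LinearMap.kerLiftQEquiv (f : X →ₗ[Λ] Y) (C : Submodule Λ (ker f)) :
    ker ((C.map (ker f).subtype).liftQ f (map_subtype_le _ _)) ≃ₗ[Λ] ker f ⧸ C :=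
  let g := (C.map (ker f).subtype).mkQ ∘ₗ (ker f).subtype
  have hker : ker g = C := by
    rw [ker_comp, ker_mkQ, comap_map_eq_of_injective (ker f).injective_subtype]
  have hrange : ker ((C.map (ker f).subtype).liftQ f (map_subtype_le _ _)) = range g := by
    rw [ker_liftQ, range_comp, range_subtype]
  (LinearEquiv.ofEq _ _ hrange).trans (g.quotKerEquivRange.symm.trans (quotEquivOfEq _ _ hker))

theorem IsSubquotient.nonempty_linearEquiv_or_of_pi_quotient [IsSimpleModule Λ Y]
    [IsSimpleModule Λ Z] [IsSimpleModule Λ U] {f : X →ₗ[Λ] Y} {C T : Submodule Λ (ker f)}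
    (hCT : IsCompl C T) [IsSemisimpleModule Λ T] (hT : IsIsotypicOfType Λ T Z) {ι : Type*}
    [Finite ι] (hU : IsSubquotient Λ U (ι → X ⧸ C.map (ker f).subtype)) :
    Nonempty (U ≃ₗ[Λ] Y) ∨ Nonempty (U ≃ₗ[Λ] Z) := by
  rcases hU.ker_or_target (((C.map (ker f).subtype).liftQ f (map_subtype_le _ _)).compLeft ι) with
    hker | hY
  · let e := (kerCompLeftEquiv _ ι).trans <| LinearEquiv.piCongrRight fun _ ↦
      (kerLiftQEquiv f C).trans (quotientEquivOfIsCompl C T hCT)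
    have := IsSemisimpleModule.congr e
    exact .inr (hker.nonempty_linearEquiv (e.isIsotypicOfType_iff.mpr hT.pi))
  · exact .inl (hY.nonempty_linearEquiv (IsIsotypicOfType.of_isSimpleModule Λ Y).pi)

theorem Submodule.liftQ_surjective {f : X →ₗ[Λ] Y} (hf : Function.Surjective f)
    {C : Submodule Λ X} (hC : C ≤ ker f) : Function.Surjective (C.liftQ f hC) :=
  range_eq_top.mp (by rw [range_liftQ, range_eq_top.mpr hf])

theorem Submodule.IsSuperfluous.ker_liftQ {f : X →ₗ[Λ] Y} (hf : Function.Surjective f)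
    (h : (ker f).IsSuperfluous) {C : Submodule Λ X} (hC : C ≤ ker f) :
    (ker (C.liftQ f hC)).IsSuperfluous := by
  intro N hN
  have : N.comap C.mkQ = ⊤ := by
    refine h _ ?_
    rw [← map_eq_top_iff (range_eq_top.mpr hf), ← C.liftQ_mkQ f hC, map_comp,
      map_comap_eq_of_surjective C.mkQ_surjective,
      map_eq_top_iff (range_eq_top.mpr (liftQ_surjective hf hC)), hN]
  rw [← map_comap_eq_of_surjective C.mkQ_surjective N, this, Submodule.map_top, range_mkQ]

end

section

variable {Λ : Type} [Ring Λ] {X Y : Type} [AddCommGroup X] [Module Λ X] [AddCommGroup Y]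
  [Module Λ Y]

theorem isIndec_of_isSuperfluous_ker [IsSimpleModule Λ Y] {f : X →ₗ[Λ] Y}
    (hf : Function.Surjective f) (h : (ker f).IsSuperfluous) : IsIndec Λ X := by
  have := IsSimpleModule.nontrivial Λ Y
  have hcoatom := isCoatom_ker_of_surjective hf
  have hle {N N' : Submodule Λ X} (hN : IsCompl N N') (hN' : N' ≠ ⊥) : N ≤ ker f := by
    refine sup_eq_right.mp ((hcoatom.le_iff.mp le_sup_right).resolve_left fun htop ↦ hN' ?_)
    exact eq_bot_of_isCompl_top (h N htop ▸ hN.symm)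
  refine ⟨hf.nontrivial, fun N₁ N₂ hN ↦ ?_⟩
  by_contra! hne
  refine hcoatom.1 (top_unique ?_)
  rw [← hN.sup_eq_top]
  exact sup_le (hle hN hne.2) (hle hN.symm hne.1)

theorem ext1Vanishes_quotient_of_forall_eq_zero [Module.Projective Λ X] {C : Submodule Λ X}
    (hC : ∀ f : C →ₗ[Λ] Y, f = 0) : Ext1Vanishes Λ (X ⧸ C) Y := by
  intro E i π hi hπ hexact
  obtain ⟨h, hh⟩ := Module.projective_lifting_property π C.mkQ hπ
  have hmem (x : C) : h x ∈ range i := by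
    rw [hexact, mem_ker, ← LinearMap.comp_apply, hh, mkQ_apply, Quotient.mk_eq_zero]
    exact x.2
  have hφ := hC ((LinearEquiv.ofInjective i hi).symm ∘ₗ (h ∘ₗ C.subtype).codRestrict _ hmem)
  have hker : C ≤ ker h := fun x hx ↦ congr_arg Subtype.val
    ((LinearEquiv.ofInjective i hi).symm.map_eq_zero_iff.mp congr($hφ ⟨x, hx⟩))
  exact ⟨C.liftQ h hker, linearMap_qext _ (by rw [comp_assoc, liftQ_mkQ, hh]; rfl)⟩

theorem IsDSummand.of_injective_s16 [IsSemisimpleModule Λ Y] {i : X →ₗ[Λ] Y}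
    (hi : Function.Injective i) : IsDSummand Λ X Y :=
  ⟨i, IsSemisimpleModule.extension_property i hi LinearMap.id⟩

theorem isDSummand_pi_succ_of_disjoint [IsSemisimpleModule Λ Y] {C T : Submodule Λ Y}
    (hCT : Disjoint C T) {U : Submodule Λ C} {m : ℕ} (e : U ≃ₗ[Λ] X) (eT : T ≃ₗ[Λ] (Fin m → X)) :
    IsDSummand Λ (Fin (m + 1) → X) Y := by
  let j := C.subtype ∘ₗ U.subtype ∘ₗ e.symm.toLinearMap
  let k := T.subtype ∘ₗ eT.symm.toLinearMap
  have hd : Disjoint (range j) (range k) :=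
    hCT.mono ((range_comp_le_range _ _).trans_eq C.range_subtype)
      ((range_comp_le_range _ _).trans_eq T.range_subtype)
  have hj : Function.Injective j :=
    C.injective_subtype.comp (U.injective_subtype.comp e.symm.injective)
  have hk : Function.Injective k := T.injective_subtype.comp eT.symm.injective
  exact .of_injective (i := j.coprod k ∘ₗ (Fin.consLinearEquiv Λ fun _ ↦ X).symm.toLinearMap)
    ((injective_coprod_of_disjoint_range hj hk hd).comp
      (Fin.consLinearEquiv Λ fun _ ↦ X).symm.injective)

end

theorem construction_of_indec_tau_rigid_general
    (Λ : Type) [Ring Λ]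
    (S : Type) [AddCommGroup S] [Module Λ S] (hS : IsSimpleModule Λ S)
    (P : Type) [AddCommGroup P] [Module Λ P] (p : P →ₗ[Λ] S) (hp : IsProjCover Λ p)
    (hss : IsSemisimpleModule Λ ↥(LinearMap.ker p))
    (hSnot : ¬ IsDSummand Λ S ↥(LinearMap.ker p))
    (S₁ : Submodule Λ ↥(LinearMap.ker p)) (hS₁ : IsSimpleModule Λ ↥S₁)
    (m : ℕ)
    (hmax : ¬ IsDSummand Λ (Fin (m + 1) → ↥S₁) ↥(LinearMap.ker p)) :
    ∀ (C T : Submodule Λ ↥(LinearMap.ker p)), IsCompl C T →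
      Nonempty (↥T ≃ₗ[Λ] (Fin m → ↥S₁)) →
      IsIndec Λ (P ⧸ Submodule.map (LinearMap.ker p).subtype C) ∧
      (∀ (N : ModuleCat.{0} Λ),
        (∃ (t : ℕ)
            (q : (Fin t → (P ⧸ Submodule.map (LinearMap.ker p).subtype C)) →ₗ[Λ] ↥N),
          Function.Surjective q) →
        Ext1Vanishes Λ (P ⧸ Submodule.map (LinearMap.ker p).subtype C) ↥N) := by
  rintro C T hCT ⟨eT⟩
  have := hp.proj
  have hC : C.map (ker p).subtype ≤ ker p := map_subtype_le _ _
  refine ⟨isIndec_of_isSuperfluous_ker (liftQ_surjective hp.surj hC)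
    (IsSuperfluous.ker_liftQ hp.surj hp.superfluous hC), ?_⟩
  rintro N ⟨t, q, hq⟩
  refine ext1Vanishes_quotient_of_forall_eq_zero fun f ↦ ?_
  let eC := C.equivMapOfInjective _ (ker p).injective_subtype
  refine (eC.eq_comp_toLinearMap_iff f 0).mp ((LinearMap.eq_zero_of_not_isSubquotient hq
    (fun U hU hsub ↦ ?_) _).trans (zero_comp _).symm)
  have := IsSemisimpleModule.congr eT
  rcases hsub.nonempty_linearEquiv_or_of_pi_quotient hCT
    (eT.isIsotypicOfType_iff.mpr (IsIsotypicOfType.of_isSimpleModule Λ S₁).pi) with ⟨⟨e⟩⟩ | ⟨⟨e⟩⟩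
  · exact hSnot (.of_injective (i := C.subtype ∘ₗ U.subtype ∘ₗ e.symm.toLinearMap)
      (C.injective_subtype.comp (U.injective_subtype.comp e.symm.injective)))
  · exact hmax (isDSummand_pi_succ_of_disjoint hCT.disjoint e eT)

/-- Construction of indecomposable τ-rigid modules: if `S` is simple with
`Ω¹S` nonzero semisimple not containing `S` as a summand, `S₁` a simple submodule of
`Ω¹S` and `m` maximal with `S₁^m` a summand of `Ω¹S`, then the cokernel `M` of
`Ω¹S/S₁^m ↪ P₀(S)` (the quotient of `P₀(S)` by a complement `C` of `S₁^m` in `Ω¹S`) is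
indecomposable and τ-rigid (`Ext¹(M, N) = 0` for all `N ∈ Fac M`). -/
theorem construction_of_indec_tau_rigid
    (Λ : Type) [Ring Λ] [IsArtinianRing Λ]
    (S : Type) [AddCommGroup S] [Module Λ S] (hS : IsSimpleModule Λ S)
    (P : Type) [AddCommGroup P] [Module Λ P] (p : P →ₗ[Λ] S) (hp : IsProjCover Λ p)
    (hne : Nontrivial ↥(LinearMap.ker p))
    (hss : IsSemisimpleModule Λ ↥(LinearMap.ker p))
    (hSnot : ¬ IsDSummand Λ S ↥(LinearMap.ker p))
    (S₁ : Submodule Λ ↥(LinearMap.ker p)) (hS₁ : IsSimpleModule Λ ↥S₁)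
    (m : ℕ) (hm : IsDSummand Λ (Fin m → ↥S₁) ↥(LinearMap.ker p))
    (hmax : ¬ IsDSummand Λ (Fin (m + 1) → ↥S₁) ↥(LinearMap.ker p)) :
    ∀ (C T : Submodule Λ ↥(LinearMap.ker p)), IsCompl C T →
      Nonempty (↥T ≃ₗ[Λ] (Fin m → ↥S₁)) →
      IsIndec Λ (P ⧸ Submodule.map (LinearMap.ker p).subtype C) ∧
      (∀ (N : ModuleCat.{0} Λ),
        (∃ (t : ℕ)
            (q : (Fin t → (P ⧸ Submodule.map (LinearMap.ker p).subtype C)) →ₗ[Λ] ↥N),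
          Function.Surjective q) →
        Ext1Vanishes Λ (P ⧸ Submodule.map (LinearMap.ker p).subtype C) ↥N) :=
  construction_of_indec_tau_rigid_general Λ S hS P p hp hss hSnot S₁ hS₁ m hmax
end
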